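/- For every integer n ≥ 2 and every p ∈ 𝓔 with a_{n−1} ≥ 0, b_{n−1} ≥ 0, c_n ≥ 0 and a_{n−1} + b_{n−1} − c_n ≥ 0, one has L(p) = (a_{n−1}! b_{n−1}!)/(c_n! (a_{n−1} + b_{n−1} − c_n)!) · L(φ(p)), where φ is the map fixing all coordinates except that it exchanges a_{n−1} and c_n, replaces b_{n−1} by a_{n−1} + b_{n−1} − c_n, and replaces b_n by a_{n−1} + b_n − c_n. (The equality holds in [0,∞].) -/

import Mathlib

/-!
Integrate first in `t = x_{n-1}`. Since `c_k = 0` for `1 < k < n`, the integrand depends on `t`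
only through `t^a (1-t)^b / δ_n^(c+1)` (with `a = a_{n-1}`, `b = b_{n-1}`, `c = c_n`), and
`δ_n = A + B t` with `A = 1 - x_n` and `B = x_n δ_{n-2}` free of `t`. So it suffices to compare the
Euler integrals `E(p, q, r) = ∫₀¹ t^p (1-t)^q / (A + B t)^(r+1)`. For `p + q = r + s`, integrate
`x^p (1-x)^q y^r (1-y)^s / (A + B x y)^(p+q+2)` over the unit square in both orders: after the
substitution `y ↦ A (1-y) / (A + C y)` the inner integrals are beta integrals, and one gets
`r! s! A^(q+1) E(p, q, r) = p! q! A^(s+1) E(r, s, p)`. The leftover power of `A = 1 - x_n` is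
absorbed by the change `b_n ↦ a_{n-1} + b_n - c_n`.
-/

open MeasureTheory Finset
open scoped ENNReal

noncomputable section

/-- The unit cube `[0,1]^n`. -/
def cube (n : ℕ) : Set (Fin n → ℝ) := Set.univ.pi fun _ => Set.Icc (0:ℝ) 1

/-- The `k`-th coordinate (1-based indexing) of `x`. -/
def ent {n : ℕ} (x : Fin n → ℝ) (k : ℕ) : ℝ := if h : k - 1 < n then x ⟨k - 1, h⟩ else 0

/-- `δ_k(x) = 1 - x_k δ_{k-1}(x)`, with `δ_0 = 1`. -/
def delta {n : ℕ} (x : Fin n → ℝ) : ℕ → ℝ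
  | 0 => 1
  | k + 1 => 1 - ent x (k + 1) * delta x k

/-- The integral `L(p)` for `p = (a_1,…,a_n,b_1,…,b_n,c_2,…,c_n)`. -/
def Lint (n : ℕ) (a b c : ℕ → ℤ) : ℝ≥0∞ :=
  ∫⁻ x in cube n, ENNReal.ofReal
    ((∏ k ∈ Icc 1 n, ent x k ^ a k * (1 - ent x k) ^ b k) /
      ((∏ k ∈ Icc 2 n, delta x k ^ c k) * delta x n))

/-- Membership in the set `ℰ`, in terms of the components of `p`. -/
def memE (n : ℕ) (a b c : ℕ → ℤ) : Prop :=
  (∀ k, 2 ≤ k → k ≤ n - 1 → c k = 0) ∧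
  (n = 3 → a 1 + b 2 = a 3 + b 3) ∧
  (4 ≤ n → a 2 = b 1 ∧ b n = c n ∧
    ∀ k, 1 ≤ k → k ≤ n - 2 → a k + b (k + 1) = a (k + 2) + b (k + 2))

open scoped Nat

theorem intervalIntegral_pow_mul_one_sub_pow (p q : ℕ) :
    ∫ x in (0:ℝ)..1, x ^ p * (1 - x) ^ q = (p ! * q ! : ℝ) / (p + q + 1)! := by
  have hbeta := Complex.betaIntegral_eq_Gamma_mul_div (p + 1) (q + 1)
    (by simp; positivity) (by simp; positivity)
  rw [show (p + 1 + (q + 1) : ℂ) = ((p + q + 1 : ℕ) : ℂ) + 1 by push_cast; ring,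
    Complex.Gamma_nat_eq_factorial, Complex.Gamma_nat_eq_factorial,
    Complex.Gamma_nat_eq_factorial, Complex.betaIntegral] at hbeta
  simp only [add_sub_cancel_right, Complex.cpow_natCast] at hbeta
  have h : ((∫ x in (0:ℝ)..1, x ^ p * (1 - x) ^ q : ℝ) : ℂ)
      = ((p ! * q ! / (p + q + 1)! : ℝ) : ℂ) := by
    rw [← intervalIntegral.integral_ofReal]
    push_cast
    exact hbeta
  exact_mod_cast h

theorem integral_Icc_pow_mul_one_sub_pow_div_pow {A C : ℝ} (hA : 0 < A) (hC : 0 ≤ C) (p q : ℕ) :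
    ∫ y in Set.Icc (0:ℝ) 1, y ^ p * (1 - y) ^ q / (A + C * y) ^ (p + q + 2)
      = (p ! * q ! : ℝ) / (p + q + 1)! / (A ^ (q + 1) * (A + C) ^ (p + 1)) := by
  rw [integral_Icc_eq_integral_Ioc, ← intervalIntegral.integral_of_le zero_le_one]
  have hpos : ∀ w : ℝ, 0 ≤ w → 0 < A + C * w := fun w hw => by positivity
  set g : ℝ → ℝ := fun y => y ^ p * (1 - y) ^ q / (A + C * y) ^ (p + q + 2)
  -- the substitution `y = f w` swaps the endpoints and the roles of `y` and `1 - y`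
  set f : ℝ → ℝ := fun w => A * (1 - w) / (A + C * w)
  set f' : ℝ → ℝ := fun w => -(A * (A + C)) / (A + C * w) ^ 2
  have hf : ∀ w ∈ Set.uIcc (0:ℝ) 1, HasDerivAt f (f' w) w := by
    intro w hw
    rw [Set.uIcc_of_le zero_le_one] at hw
    refine (((hasDerivAt_id w).const_sub 1 |>.const_mul A).div
      ((hasDerivAt_id w).const_mul C |>.const_add A) (hpos w hw.1).ne').congr_deriv ?_
    simp only [f', id]
    ring
  have hf' : ContinuousOn f' (Set.uIcc 0 1) := by
    rw [Set.uIcc_of_le zero_le_one]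
    exact ContinuousOn.div (by fun_prop) (by fun_prop)
      fun w hw => pow_ne_zero _ (hpos w hw.1).ne'
  have hg : ContinuousOn g (f '' Set.uIcc 0 1) := by
    refine ContinuousOn.div (by fun_prop) (by fun_prop) ?_
    rintro _ ⟨w, hw, rfl⟩
    rw [Set.uIcc_of_le zero_le_one] at hw
    have : 0 ≤ f w := div_nonneg (mul_nonneg hA.le (by linarith [hw.2])) (hpos w hw.1).le
    exact pow_ne_zero _ (hpos _ this).ne'
  have hf0 : f 0 = 1 := by simp [f, hA.ne']
  have hf1 : f 1 = 0 := by simp [f]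
  have hsubst : ∀ w ∈ Set.uIcc (0:ℝ) 1,
      -((g ∘ f) w * f' w) = w ^ q * (1 - w) ^ p / (A ^ (q + 1) * (A + C) ^ (p + 1)) := by
    intro w hw
    rw [Set.uIcc_of_le zero_le_one] at hw
    have hD := (hpos w hw.1).ne'
    have hA' := hA.ne'
    have hAC : A + C ≠ 0 := by positivity
    have h1f : 1 - f w = (A + C) * w / (A + C * w) := by
      rw [eq_div_iff hD, sub_mul, div_mul_cancel₀ _ hD]; ring
    have hAf : A + C * f w = A * (A + C) / (A + C * w) := by
      rw [eq_div_iff hD, add_mul, mul_assoc, div_mul_cancel₀ _ hD]; ring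
    simp only [Function.comp_apply, g, f']
    rw [h1f, hAf, show f w = A * (1 - w) / (A + C * w) from rfl, div_pow, div_pow, div_pow]
    generalize A + C * w = D at hD ⊢
    simp only [mul_pow, pow_add]
    field_simp
  calc ∫ y in (0:ℝ)..1, g y = -∫ y in (1:ℝ)..0, g y := intervalIntegral.integral_symm 1 0
    _ = ∫ w in (0:ℝ)..1, -((g ∘ f) w * f' w) := by
      rw [intervalIntegral.integral_neg, intervalIntegral.integral_comp_mul_deriv' hf hf' hg,
        hf0, hf1]
    _ = ∫ w in (0:ℝ)..1, w ^ q * (1 - w) ^ p / (A ^ (q + 1) * (A + C) ^ (p + 1)) :=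
      intervalIntegral.integral_congr hsubst
    _ = _ := by
      rw [intervalIntegral.integral_div, intervalIntegral_pow_mul_one_sub_pow, mul_comm,
        add_comm q]

def eulerIntegral (p q r : ℕ) (A B : ℝ) : ℝ :=
  ∫ t in Set.Icc (0:ℝ) 1, t ^ p * (1 - t) ^ q / (A + B * t) ^ (r + 1)

theorem factorial_mul_pow_mul_eulerIntegral_comm {A B : ℝ} (hA : 0 < A) (hB : 0 ≤ B)
    {p q r s : ℕ} (h : p + q = r + s) :
    (r ! * s ! : ℝ) * A ^ (q + 1) * eulerIntegral p q r A B
      = p ! * q ! * A ^ (s + 1) * eulerIntegral r s p A B := by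
  set G : ℝ → ℝ → ℝ := fun x y =>
    x ^ p * (1 - x) ^ q * (y ^ r * (1 - y) ^ s / (A + B * x * y) ^ (p + q + 2))
  have hpos : ∀ x y : ℝ, 0 ≤ x → 0 ≤ y → 0 < A + B * x * y := fun x y hx hy => by positivity
  have hG : Integrable (Function.uncurry G)
      ((volume.restrict (Set.Icc (0:ℝ) 1)).prod (volume.restrict (Set.Icc (0:ℝ) 1))) := by
    rw [Measure.prod_restrict]
    refine ContinuousOn.integrableOn_compact (isCompact_Icc.prod isCompact_Icc) ?_
    refine ContinuousOn.mul (by fun_prop) (ContinuousOn.div (by fun_prop) (by fun_prop) ?_)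
    rintro ⟨x, y⟩ ⟨hx, hy⟩
    exact pow_ne_zero _ (hpos x y hx.1 hy.1).ne'
  have hN : ((p + q + 1)! : ℝ) ≠ 0 := by positivity
  have inner_y : ∀ x ∈ Set.Icc (0:ℝ) 1, ∫ y in Set.Icc (0:ℝ) 1, G x y
      = ((p + q + 1)! : ℝ)⁻¹ * ((r ! * s ! : ℝ) / A ^ (s + 1) *
          (x ^ p * (1 - x) ^ q / (A + B * x) ^ (r + 1))) := by
    intro x hx
    simp only [G]
    rw [integral_const_mul, h,
      integral_Icc_pow_mul_one_sub_pow_div_pow hA (mul_nonneg hB hx.1) r s]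
    field_simp
  have inner_x : ∀ y ∈ Set.Icc (0:ℝ) 1, ∫ x in Set.Icc (0:ℝ) 1, G x y
      = ((p + q + 1)! : ℝ)⁻¹ * ((p ! * q ! : ℝ) / A ^ (q + 1) *
          (y ^ r * (1 - y) ^ s / (A + B * y) ^ (p + 1))) := by
    intro y hy
    have hGy : ∀ x, G x y = y ^ r * (1 - y) ^ s *
        (x ^ p * (1 - x) ^ q / (A + B * y * x) ^ (p + q + 2)) := fun x => by
      simp only [G]; ring
    simp only [hGy]
    rw [integral_const_mul, integral_Icc_pow_mul_one_sub_pow_div_pow hA (mul_nonneg hB hy.1) p q]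
    field_simp
  have hswap := integral_integral_swap hG
  rw [setIntegral_congr_fun measurableSet_Icc inner_y,
    setIntegral_congr_fun measurableSet_Icc inner_x, integral_const_mul, integral_const_mul,
    integral_const_mul, integral_const_mul] at hswap
  change _ * (_ * eulerIntegral p q r A B) = _ * (_ * eulerIntegral r s p A B) at hswap
  have hAs : A ^ (s + 1) ≠ 0 := by positivity
  have hAq : A ^ (q + 1) ≠ 0 := by positivity
  have hcancel := mul_left_cancel₀ (inv_ne_zero hN) hswap
  field_simp at hcancel
  linear_combination hcancel

theorem lintegral_Icc_ofReal_mul_eq_ofReal_mul_eulerIntegral {A B K : ℝ} (hA : 0 < A) (hB : 0 ≤ B)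
    (hK : 0 ≤ K) (p q r : ℕ) :
    ∫⁻ t in Set.Icc (0:ℝ) 1, ENNReal.ofReal (K * (t ^ p * (1 - t) ^ q / (A + B * t) ^ (r + 1)))
      = ENNReal.ofReal (K * eulerIntegral p q r A B) := by
  have hpos : ∀ t ∈ Set.Icc (0:ℝ) 1, 0 < A + B * t := fun t ht => by
    have := ht.1; positivity
  rw [eulerIntegral, ← integral_const_mul]
  refine (ofReal_integral_eq_lintegral_ofReal ?_ ?_).symm
  · refine ContinuousOn.integrableOn_compact isCompact_Icc ?_
    exact ContinuousOn.mul (by fun_prop) (ContinuousOn.div (by fun_prop) (by fun_prop)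
      fun t ht => pow_ne_zero _ (hpos t ht).ne')
  · refine (ae_restrict_iff' measurableSet_Icc).2 (Filter.Eventually.of_forall fun t ht => ?_)
    have := hpos t ht
    have : 0 ≤ 1 - t := by linarith [ht.2]
    have := ht.1
    positivity

theorem lintegral_pi_eq_lintegral_lintegral_update {ι : Type*} [Fintype ι] [DecidableEq ι]
    {X : ι → Type*} [∀ j, MeasurableSpace (X j)] (μ : ∀ j, Measure (X j))
    [∀ j, SigmaFinite (μ j)] (i : ι) [IsProbabilityMeasure (μ i)]
    {f : (∀ j, X j) → ℝ≥0∞} (hf : Measurable f) :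
    ∫⁻ x, f x ∂Measure.pi μ = ∫⁻ x, ∫⁻ t, f (Function.update x i t) ∂μ i ∂Measure.pi μ := by
  rw [← lmarginal_singleton]
  refine lintegral_eq_of_lmarginal_eq {i} hf (hf.lmarginal μ) (funext fun x => ?_)
  rw [lmarginal_singleton (∫⋯∫⁻_{i}, f ∂μ)]
  simp only [lmarginal_update_of_mem μ (Finset.mem_singleton_self i), lintegral_const,
    measure_univ, mul_one]

instance : IsProbabilityMeasure (volume.restrict (Set.Icc (0:ℝ) 1)) := ⟨by simp⟩

theorem volume_restrict_cube (n : ℕ) :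
    volume.restrict (cube n) = Measure.pi fun _ => volume.restrict (Set.Icc (0:ℝ) 1) := by
  rw [cube, volume_pi, Measure.restrict_pi_pi]

section

variable {n : ℕ}

theorem ent_update_self (x : Fin n → ℝ) (i : Fin n) (t : ℝ) :
    ent (Function.update x i t) (i + 1) = t := by
  simp [ent]

theorem ent_update_of_ne (x : Fin n → ℝ) {i : Fin n} (t : ℝ) {k : ℕ} (hk : k - 1 ≠ i) :
    ent (Function.update x i t) k = ent x k := by
  unfold ent
  split_ifs
  · exact Function.update_of_ne (Fin.ne_of_val_ne hk) _ _
  · rfl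

theorem ent_last {m : ℕ} (x : Fin (m + 1) → ℝ) : ent x (m + 1) = x (Fin.last m) := by
  simp [ent, Fin.last]

theorem delta_add_two (x : Fin n → ℝ) (k : ℕ) :
    delta x (k + 2) = 1 - ent x (k + 2) + ent x (k + 2) * delta x k * ent x (k + 1) := by
  simp only [delta]
  ring

theorem delta_update_of_le (x : Fin n → ℝ) {i : Fin n} (t : ℝ) {k : ℕ} (hk : k ≤ i) :
    delta (Function.update x i t) k = delta x k := by
  induction k with
  | zero => rfl
  | succ k ih => simp only [delta, ent_update_of_ne x t (by omega : k + 1 - 1 ≠ i), ih (by omega)]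

theorem ent_mem_Icc {x : Fin n → ℝ} (hx : x ∈ cube n) (k : ℕ) : ent x k ∈ Set.Icc (0:ℝ) 1 := by
  unfold ent
  split_ifs
  · exact hx _ (Set.mem_univ _)
  · exact ⟨le_rfl, zero_le_one⟩

theorem delta_mem_Icc {x : Fin n → ℝ} (hx : x ∈ cube n) (k : ℕ) :
    delta x k ∈ Set.Icc (0:ℝ) 1 := by
  induction k with
  | zero => exact ⟨zero_le_one, le_rfl⟩
  | succ k ih =>
    obtain ⟨h0, h1⟩ := ent_mem_Icc hx (k + 1)
    simp only [delta, Set.mem_Icc]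
    constructor <;> nlinarith [ih.1, ih.2]

@[fun_prop]
theorem measurable_ent (k : ℕ) : Measurable fun x : Fin n → ℝ => ent x k := by
  unfold ent
  split_ifs <;> fun_prop

@[fun_prop]
theorem measurable_delta (k : ℕ) : Measurable fun x : Fin n → ℝ => delta x k := by
  induction k with
  | zero => exact measurable_const
  | succ k ih => simp only [delta]; fun_prop

def integrand (n : ℕ) (a b c : ℕ → ℤ) (x : Fin n → ℝ) : ℝ :=
  (∏ k ∈ Icc 1 n, ent x k ^ a k * (1 - ent x k) ^ b k) /
    ((∏ k ∈ Icc 2 n, delta x k ^ c k) * delta x n)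

theorem measurable_integrand (a b c : ℕ → ℤ) : Measurable (integrand n a b c) := by
  unfold integrand
  fun_prop

theorem integrand_update {m : ℕ} {a b c : ℕ → ℤ} (hc : ∀ k, 2 ≤ k → k ≤ m + 1 → c k = 0)
    (x : Fin (m + 2) → ℝ) (t : ℝ) :
    integrand (m + 2) a b c (Function.update x ⟨m, by omega⟩ t) =
      (∏ k ∈ Icc 1 m, ent x k ^ a k * (1 - ent x k) ^ b k) *
        (ent x (m + 2) ^ a (m + 2) * (1 - ent x (m + 2)) ^ b (m + 2)) *
        -- `D ^ c * D`, not `D ^ (c + 1)`: the two differ at `D = 0`, `c = -1`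
        (t ^ a (m + 1) * (1 - t) ^ b (m + 1) /
          ((1 - ent x (m + 2) + ent x (m + 2) * delta x m * t) ^ c (m + 2) *
            (1 - ent x (m + 2) + ent x (m + 2) * delta x m * t))) := by
  set y := Function.update x ⟨m, by omega⟩ t
  have hy_var : ent y (m + 1) = t := ent_update_self x _ t
  have hy_last : ent y (m + 2) = ent x (m + 2) := ent_update_of_ne x t (by simp)
  have hy_init : ∀ k ∈ Icc 1 m, ent y k ^ a k * (1 - ent y k) ^ b k
      = ent x k ^ a k * (1 - ent x k) ^ b k := fun k hk => by
    rw [ent_update_of_ne x t (by simp at hk ⊢; omega)]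
  have hy_delta : delta y (m + 2) = 1 - ent x (m + 2) + ent x (m + 2) * delta x m * t := by
    rw [delta_add_two, hy_var, hy_last, delta_update_of_le x t le_rfl]
  have hy_den : ∏ k ∈ Icc 2 (m + 2), delta y k ^ c k = delta y (m + 2) ^ c (m + 2) := by
    rw [prod_Icc_succ_top (by omega), prod_eq_one fun k hk => ?_, one_mul]
    rw [mem_Icc] at hk
    rw [hc k hk.1 hk.2, zpow_zero]
  rw [integrand, prod_Icc_succ_top (by omega), prod_Icc_succ_top (by omega), prod_congr rfl hy_init,
    hy_den, hy_delta, hy_var, hy_last]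
  ring

theorem integrand_phi_update {m : ℕ} {a b c : ℕ → ℤ} (hc : ∀ k, 2 ≤ k → k ≤ m + 1 → c k = 0)
    (x : Fin (m + 2) → ℝ) (t : ℝ) :
    integrand (m + 2)
        (fun k => if k = m + 1 then c (m + 2) else a k)
        (fun k => if k = m + 1 then a (m + 1) + b (m + 1) - c (m + 2)
          else if k = m + 2 then a (m + 1) + b (m + 2) - c (m + 2) else b k)
        (fun k => if k = m + 2 then a (m + 1) else c k) (Function.update x ⟨m, by omega⟩ t) =
      (∏ k ∈ Icc 1 m, ent x k ^ a k * (1 - ent x k) ^ b k) *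
        (ent x (m + 2) ^ a (m + 2) *
          (1 - ent x (m + 2)) ^ (a (m + 1) + b (m + 2) - c (m + 2))) *
        (t ^ c (m + 2) * (1 - t) ^ (a (m + 1) + b (m + 1) - c (m + 2)) /
          ((1 - ent x (m + 2) + ent x (m + 2) * delta x m * t) ^ a (m + 1) *
            (1 - ent x (m + 2) + ent x (m + 2) * delta x m * t))) := by
  rw [integrand_update fun k hk hk' => by simp only [if_neg (by omega : k ≠ m + 2), hc k hk hk']]
  simp only [if_pos, if_neg (by omega : m + 2 ≠ m + 1), if_neg (by omega : m + 1 ≠ m + 2)]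
  congr 2
  refine prod_congr rfl fun k hk => ?_
  rw [mem_Icc] at hk
  rw [if_neg (by omega : k ≠ m + 1), if_neg (by omega : k ≠ m + 1), if_neg (by omega : k ≠ m + 2)]

theorem Lint_eq_lintegral_lintegral_update (a b c : ℕ → ℤ) (i : Fin n) :
    Lint n a b c = ∫⁻ x in cube n, ∫⁻ t in Set.Icc (0:ℝ) 1,
      ENNReal.ofReal (integrand n a b c (Function.update x i t)) := by
  rw [Lint, volume_restrict_cube]
  exact lintegral_pi_eq_lintegral_lintegral_update _ i (measurable_integrand a b c).ennreal_ofReal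

end

theorem lintegral_integrand_update {m : ℕ} {a b c : ℕ → ℤ}
    (hc : ∀ k, 2 ≤ k → k ≤ m + 1 → c k = 0) (h1 : 0 ≤ a (m + 1)) (h2 : 0 ≤ b (m + 1))
    (h3 : 0 ≤ c (m + 2)) (h4 : 0 ≤ a (m + 1) + b (m + 1) - c (m + 2))
    {x : Fin (m + 2) → ℝ} (hx : x ∈ cube (m + 2)) (hx1 : x (Fin.last (m + 1)) ≠ 1) :
    ∫⁻ t in Set.Icc (0:ℝ) 1,
        ENNReal.ofReal (integrand (m + 2) a b c (Function.update x ⟨m, by omega⟩ t)) =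
      ENNReal.ofReal
        ((Nat.factorial (a (m + 1)).toNat * Nat.factorial (b (m + 1)).toNat : ℝ) /
          (Nat.factorial (c (m + 2)).toNat *
            Nat.factorial ((a (m + 1) + b (m + 1) - c (m + 2)).toNat))) *
      ∫⁻ t in Set.Icc (0:ℝ) 1, ENNReal.ofReal (integrand (m + 2)
        (fun k => if k = m + 1 then c (m + 2) else a k)
        (fun k => if k = m + 1 then a (m + 1) + b (m + 1) - c (m + 2)
          else if k = m + 2 then a (m + 1) + b (m + 2) - c (m + 2) else b k)
        (fun k => if k = m + 2 then a (m + 1) else c k) (Function.update x ⟨m, by omega⟩ t)) := by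
  obtain ⟨α, hα⟩ := Int.eq_ofNat_of_zero_le h1
  obtain ⟨β, hβ⟩ := Int.eq_ofNat_of_zero_le h2
  obtain ⟨γ, hγ⟩ := Int.eq_ofNat_of_zero_le h3
  obtain ⟨δ, hδ⟩ := Int.eq_ofNat_of_zero_le h4
  simp only [integrand_update hc, integrand_phi_update hc]
  rw [hδ]
  simp only [hα, hβ, hγ, Int.toNat_natCast, zpow_natCast, ← pow_succ]
  set A := 1 - ent x (m + 2)
  set B := ent x (m + 2) * delta x m
  set P := ∏ k ∈ Icc 1 m, ent x k ^ a k * (1 - ent x k) ^ b k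
  have hA : 0 < A := by
    have hlast : ent x (m + 2) = x (Fin.last (m + 1)) := ent_last x
    exact sub_pos.2 (lt_of_le_of_ne (ent_mem_Icc hx (m + 2)).2 (hlast ▸ hx1))
  have hB : 0 ≤ B := mul_nonneg (ent_mem_Icc hx _).1 (delta_mem_Icc hx _).1
  have hP : 0 ≤ P := prod_nonneg fun k _ => mul_nonneg (zpow_nonneg (ent_mem_Icc hx k).1 _)
    (zpow_nonneg (sub_nonneg.2 (ent_mem_Icc hx k).2) _)
  have hK : 0 ≤ ent x (m + 2) ^ a (m + 2) := zpow_nonneg (ent_mem_Icc hx _).1 _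
  rw [lintegral_Icc_ofReal_mul_eq_ofReal_mul_eulerIntegral hA hB (by positivity),
    lintegral_Icc_ofReal_mul_eq_ofReal_mul_eulerIntegral hA hB (by positivity),
    ← ENNReal.ofReal_mul (by positivity)]
  congr 1
  have hsymm := factorial_mul_pow_mul_eulerIntegral_comm hA hB (p := α) (q := β) (r := γ)
    (s := δ) (by omega)
  have hApow : A ^ ((α : ℤ) + b (m + 2) - γ) = A ^ b (m + 2) * A ^ (δ + 1) / A ^ (β + 1) := by
    rw [← zpow_natCast, ← zpow_natCast, ← zpow_add₀ hA.ne', ← zpow_sub₀ hA.ne']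
    congr 1
    push_cast
    omega
  have hγδ : (γ ! * δ ! : ℝ) ≠ 0 := by positivity
  have hAβ : A ^ (β + 1) ≠ 0 := by positivity
  rw [hApow]
  clear_value A B P
  field_simp
  linear_combination (P * ent x (m + 2) ^ a (m + 2)) * hsymm

theorem stmt13 (n : ℕ) (hn : 2 ≤ n) (a b c : ℕ → ℤ) (hE : memE n a b c)
    (h1 : 0 ≤ a (n - 1)) (h2 : 0 ≤ b (n - 1)) (h3 : 0 ≤ c n)
    (h4 : 0 ≤ a (n - 1) + b (n - 1) - c n) :
    Lint n a b c =
      ENNReal.ofReal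
        ((Nat.factorial (a (n - 1)).toNat * Nat.factorial (b (n - 1)).toNat : ℝ) /
          (Nat.factorial (c n).toNat *
            Nat.factorial ((a (n - 1) + b (n - 1) - c n).toNat))) *
      Lint n (fun k => if k = n - 1 then c n else a k)
        (fun k => if k = n - 1 then a (n - 1) + b (n - 1) - c n
          else if k = n then a (n - 1) + b n - c n else b k)
        (fun k => if k = n then a (n - 1) else c k) := by
  obtain ⟨hc, -, -⟩ := hE
  obtain ⟨m, rfl⟩ : ∃ m, n = m + 2 := ⟨n - 2, by omega⟩
  simp only [show m + 2 - 1 = m + 1 from rfl] at hc h1 h2 h4 ⊢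
  rw [Lint_eq_lintegral_lintegral_update _ _ _ ⟨m, by omega⟩,
    Lint_eq_lintegral_lintegral_update _ _ _ ⟨m, by omega⟩,
    ← lintegral_const_mul' _ _ ENNReal.ofReal_ne_top]
  refine lintegral_congr_ae ?_
  filter_upwards [ae_restrict_mem (MeasurableSet.univ_pi fun _ => measurableSet_Icc),
    ae_restrict_of_ae (Measure.ae_eval_ne _ (Fin.last (m + 1)) 1)] with x hx hx1
  exact lintegral_integrand_update hc h1 h2 h3 h4 hx hx1

end
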